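/- Let I ⊆ R be a monomial ideal with linear quotients whose decomposition function b is regular. Let m ∈ G(I), α ⊆ set(m), and let σ be a permutation of α such that ch(m,α,σ) is degenerate. Then there exists a permutation σ′ of α such that ch(m,α,σ′) is nondegenerate and every vertex monomial of ch(m,α,σ) occurs among the vertex monomials of ch(m,α,σ′); in particular ch(m,α,σ) is a face of the simplex ch(m,α,σ′). -/

import Mathlib

open MvPolynomial

/-- The monomial ideal generated by a set of exponent vectors. -/
noncomputable def genIdeal (K : Type*) [Field K] {n : ℕ} (ms : Set (Fin n →₀ ℕ)) :
    Ideal (MvPolynomial (Fin n) K) :=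
  Ideal.span ((fun u => MvPolynomial.monomial u (1 : K)) '' ms)

/-- The colon ideal `⟨m_1, …, m_{j-1}⟩ : m_j`. -/
noncomputable def colonJ (K : Type*) [Field K] {n k : ℕ} (m : Fin k → (Fin n →₀ ℕ))
    (j : Fin k) : Ideal (MvPolynomial (Fin n) K) :=
  Submodule.colon (genIdeal K {u | ∃ i : Fin k, i < j ∧ u = m i})
    (Ideal.span {MvPolynomial.monomial (m j) (1 : K)})

/-- `I` has linear quotients w.r.t. the ordering `m_1,…,m_k` of its generators:
each colon ideal is generated by a subset of the variables. -/
def HasLinearQuotients (K : Type*) [Field K] {n k : ℕ}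
    (m : Fin k → (Fin n →₀ ℕ)) : Prop :=
  ∀ j : Fin k, ∃ S : Set (Fin n),
    colonJ K m j = Ideal.span ((fun s => (MvPolynomial.X s : MvPolynomial (Fin n) K)) '' S)

/-- `set(m_j) = {i : x_i ∈ ⟨m_1,…,m_{j-1}⟩ : m_j}`. -/
def mset (K : Type*) [Field K] {n k : ℕ} (m : Fin k → (Fin n →₀ ℕ)) (j : Fin k) :
    Set (Fin n) :=
  {t | (MvPolynomial.X t : MvPolynomial (Fin n) K) ∈ colonJ K m j}

/-- The `m i` are minimal monomial generators: none divides another. -/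
def MinimalGens {n k : ℕ} (m : Fin k → (Fin n →₀ ℕ)) : Prop :=
  ∀ i j : Fin k, m i ≤ m j → i = j

/-- `b` is the decomposition function: for a monomial `u ∈ I`, `b u` is the smallest
index `j` with `u ∈ ⟨m_1,…,m_j⟩`. -/
def IsDecompositionFunction (K : Type*) [Field K] {n k : ℕ}
    (m : Fin k → (Fin n →₀ ℕ)) (b : (Fin n →₀ ℕ) → Fin k) : Prop :=
  ∀ u : Fin n →₀ ℕ, MvPolynomial.monomial u (1 : K) ∈ genIdeal K (Set.range m) →
    (MvPolynomial.monomial u (1 : K) ∈ genIdeal K {v | ∃ i : Fin k, i ≤ b u ∧ v = m i}) ∧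
    (∀ j : Fin k,
      MvPolynomial.monomial u (1 : K) ∈ genIdeal K {v | ∃ i : Fin k, i ≤ j ∧ v = m i} →
      b u ≤ j)

/-- The decomposition function is regular: `set(b(x_t·m)) ⊆ set(m)` for every
generator `m` and every `t ∈ set(m)`. -/
def IsRegularDecomp (K : Type*) [Field K] {n k : ℕ}
    (m : Fin k → (Fin n →₀ ℕ)) (b : (Fin n →₀ ℕ) → Fin k) : Prop :=
  ∀ j : Fin k, ∀ t ∈ mset K m j,
    mset K m (b (m j + Finsupp.single t 1)) ⊆ mset K m j

/-- The sequence of vertex monomials `m_0 = m₀`, `m_{i+1} = b(x_{σ(i)} · m_i)` of the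
simplex `ch(m, α, σ)` (here `σ` is 0-indexed: `σ 0, …, σ (p-1)` is the permutation). -/
noncomputable def chainSeq {n k : ℕ} (m : Fin k → (Fin n →₀ ℕ)) (b : (Fin n →₀ ℕ) → Fin k)
    (m0 : Fin n →₀ ℕ) (σ : ℕ → Fin n) : ℕ → (Fin n →₀ ℕ)
  | 0 => m0
  | i + 1 => m (b (chainSeq m b m0 σ i + Finsupp.single (σ i) 1))

/-- `σ 0, …, σ (p-1)` is a permutation (an ordering) of the finite set `α`. -/
def PermOf {n : ℕ} (σ : ℕ → Fin n) (p : ℕ) (α : Finset (Fin n)) : Prop :=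
  Set.InjOn σ (Set.Iio p) ∧ ∀ a : Fin n, a ∈ α ↔ ∃ i < p, σ i = a

/-- `ch(m,α,σ)` is nondegenerate: the vertex monomials `m_0, …, m_p` are pairwise
distinct. -/
def Nondeg {n k : ℕ} (m : Fin k → (Fin n →₀ ℕ)) (b : (Fin n →₀ ℕ) → Fin k)
    (m0 : Fin n →₀ ℕ) (σ : ℕ → Fin n) (p : ℕ) : Prop :=
  Set.InjOn (chainSeq m b m0 σ) (Set.Iic p)

/-- A monomial (exponent vector) regarded as a point of `ℝⁿ`. -/
def toR {n : ℕ} (u : Fin n →₀ ℕ) : Fin n → ℝ := fun a => (u a : ℝ)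

/-- The set of vertex monomials of `ch(m,α,σ)`. -/
def vertSet {n k : ℕ} (m : Fin k → (Fin n →₀ ℕ)) (b : (Fin n →₀ ℕ) → Fin k)
    (m0 : Fin n →₀ ℕ) (σ : ℕ → Fin n) (p : ℕ) : Set (Fin n →₀ ℕ) :=
  {v | ∃ i ≤ p, v = chainSeq m b m0 σ i}

/-!
Call step `r` of a chain productive if `σ r ∈ set(m_r)`. A productive step moves to a
generator strictly earlier in the ordering, an unproductive one stays put, so the simplex is
nondegenerate exactly when every step is productive.

Let step `i` be the first unproductive one. Since `σ i ∈ α ⊆ set(m_0)`, there is a last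
`L < i` with `σ i ∈ set(m_L)`. Linear quotients and regularity of `b` give an exchange
property: performing `σ i` before `σ L` keeps both steps productive and arrives at `m_{L+1}`
again. Hence moving `σ i` to position `L` replays the old chain up to `m_L`, inserts one new
vertex, shifts `m_{L+1}, …, m_i` by one position and, because step `i` was stationary,
agrees with the old chain afterwards. The vertex set only grows and the first `i + 1` steps
are now productive; repeat.
-/

lemma Finsupp.le_of_le_add_single_of_le_add_single {ι : Type*} {u v : ι →₀ ℕ} {s t : ι}
    (hst : s ≠ t) (hs : u ≤ v + Finsupp.single s 1) (ht : u ≤ v + Finsupp.single t 1) :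
    u ≤ v := by
  classical
  intro x
  have hsx := hs x
  have htx := ht x
  rw [Finsupp.add_apply, Finsupp.single_apply] at hsx
  rw [Finsupp.add_apply, Finsupp.single_apply] at htx
  split_ifs at hsx htx with h₁ h₂ <;> first | omega | exact absurd (h₁.trans h₂.symm) hst

lemma Nat.exists_lt_and_not_succ_of_zero {P : ℕ → Prop} {i : ℕ} (h0 : P 0) (hi : ¬ P i) :
    ∃ L < i, P L ∧ ¬ P (L + 1) := by
  induction i with
  | zero => exact absurd h0 hi
  | succ i ih =>
    by_cases hPi : P i
    · exact ⟨i, i.lt_succ_self, hPi, hi⟩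
    · obtain ⟨L, hL, hPL⟩ := ih hPi
      exact ⟨L, hL.trans i.lt_succ_self, hPL⟩

section Permutation

variable {n : ℕ}

lemma permOf_iff_bijOn {σ : ℕ → Fin n} {p : ℕ} {α : Finset (Fin n)} :
    PermOf σ p α ↔ Set.BijOn σ (Set.Iio p) α := by
  simp only [PermOf, Set.BijOn, Set.MapsTo, Set.SurjOn, Set.subset_def, Set.mem_image,
    Finset.mem_coe, Set.mem_Iio]
  grind

lemma PermOf.comp_bijOn {σ : ℕ → Fin n} {p : ℕ} {α : Finset (Fin n)} (hσ : PermOf σ p α)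
    {π : ℕ → ℕ} (hπ : Set.BijOn π (Set.Iio p) (Set.Iio p)) : PermOf (σ ∘ π) p α :=
  permOf_iff_bijOn.mpr ((permOf_iff_bijOn.mp hσ).comp hπ)

/-- `σ ∘ cycleIdx L i` is `σ` with its entry at position `i` moved to position `L`, the
entries at positions `L, …, i - 1` shifting one step to the right. -/
def cycleIdx (L i r : ℕ) : ℕ :=
  if r < L ∨ i < r then r else if r = L then i else r - 1

lemma bijOn_cycleIdx {L i p : ℕ} (hi : i < p) :
    Set.BijOn (cycleIdx L i) (Set.Iio p) (Set.Iio p) := by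
  let inv (r : ℕ) : ℕ := if r < L ∨ i < r then r else if r = i then L else r + 1
  refine Set.InvOn.bijOn (f' := inv) ⟨fun r hr => ?_, fun r hr => ?_⟩ (fun r hr => ?_)
    (fun r hr => ?_) <;>
  simp only [Set.mem_Iio, cycleIdx, inv] at hr ⊢ <;> split_ifs <;> omega

lemma cycleIdx_of_lt {L i r : ℕ} (hr : r < L) : cycleIdx L i r = r := by
  simp [cycleIdx, hr]

lemma cycleIdx_left {L i : ℕ} (hL : L ≤ i) : cycleIdx L i L = i := by
  simp only [cycleIdx]; split_ifs <;> omega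

lemma cycleIdx_succ {L i r : ℕ} (hLr : L ≤ r) (hri : r < i) : cycleIdx L i (r + 1) = r := by
  simp only [cycleIdx]; split_ifs <;> omega

lemma cycleIdx_of_gt {L i r : ℕ} (hr : i < r) : cycleIdx L i r = r := by
  simp [cycleIdx, hr]

end Permutation

section

variable {K : Type*} [Field K] {n k : ℕ} {m : Fin k → (Fin n →₀ ℕ)}
  {b : (Fin n →₀ ℕ) → Fin k}

lemma mem_genIdeal_iff {S : Set (Fin n →₀ ℕ)} {u : Fin n →₀ ℕ} :
    monomial u (1 : K) ∈ genIdeal K S ↔ ∃ v ∈ S, v ≤ u := by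
  simp [genIdeal, mem_ideal_span_monomial_image]

lemma mem_colonJ_iff {q : Fin n →₀ ℕ} {j : Fin k} :
    monomial q (1 : K) ∈ colonJ K m j ↔ ∃ i < j, m i ≤ q + m j := by
  rw [colonJ, ← Ideal.submodule_span_eq, Submodule.mem_colon_span_singleton, smul_eq_mul,
    monomial_mul, mul_one, mem_genIdeal_iff]
  simp

lemma mem_mset_iff {t : Fin n} {j : Fin k} :
    t ∈ mset K m j ↔ ∃ i < j, m i ≤ m j + Finsupp.single t 1 := by
  rw [mset, Set.mem_ofPred_eq, X, mem_colonJ_iff]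
  simp [add_comm]

lemma HasLinearQuotients.exists_mem_mset_ne_zero (hlq : HasLinearQuotients K m)
    {q : Fin n →₀ ℕ} {j : Fin k} (h : ∃ i < j, m i ≤ q + m j) :
    ∃ r ∈ mset K m j, q r ≠ 0 := by
  obtain ⟨S, hS⟩ := hlq j
  have hq := mem_colonJ_iff (K := K).mpr h
  rw [hS, mem_ideal_span_X_image] at hq
  obtain ⟨r, hrS, hr⟩ := hq q (by simp)
  exact ⟨r, by rw [mset, Set.mem_ofPred_eq, hS]; exact Ideal.subset_span ⟨r, hrS, rfl⟩, hr⟩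

namespace IsDecompositionFunction

variable (hb : IsDecompositionFunction K m b)
include hb

lemma le_of_le {u : Fin n →₀ ℕ} {i : Fin k} (hi : m i ≤ u) : b u ≤ i :=
  (hb u (mem_genIdeal_iff.mpr ⟨m i, ⟨i, rfl⟩, hi⟩)).2 i
    (mem_genIdeal_iff.mpr ⟨m i, ⟨i, le_rfl, rfl⟩, hi⟩)

lemma gen_le {u : Fin n →₀ ℕ} {i : Fin k} (hi : m i ≤ u) : m (b u) ≤ u := by
  obtain ⟨_, ⟨i', hi', rfl⟩, hle⟩ :=
    mem_genIdeal_iff.mp (hb u (mem_genIdeal_iff.mpr ⟨m i, ⟨i, rfl⟩, hi⟩)).1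
  rwa [le_antisymm hi' (hb.le_of_le hle)] at hle

lemma apply_add_eq_iff (hlq : HasLinearQuotients K m) {c : Fin k} {q : Fin n →₀ ℕ} :
    b (m c + q) = c ↔ ∀ r ∈ mset K m c, q r = 0 := by
  constructor
  · intro hc r hr
    by_contra hqr
    obtain ⟨i, hi, hle⟩ := mem_mset_iff.mp hr
    have hrq : m c + Finsupp.single r 1 ≤ m c + q :=
      add_le_add_right (Finsupp.single_le_iff.mpr (Nat.one_le_iff_ne_zero.mpr hqr)) _
    exact absurd (hc ▸ hb.le_of_le (hle.trans hrq)) (not_le.mpr hi)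
  · intro hq
    refine le_antisymm (hb.le_of_le le_self_add) (not_lt.mp fun hlt => ?_)
    obtain ⟨r, hr, hqr⟩ := hlq.exists_mem_mset_ne_zero
      ⟨_, hlt, (hb.gen_le (le_self_add : m c ≤ m c + q)).trans_eq (add_comm _ _)⟩
    exact hqr (hq r hr)

end IsDecompositionFunction

noncomputable def nextIdx (m : Fin k → (Fin n →₀ ℕ)) (b : (Fin n →₀ ℕ) → Fin k)
    (a : Fin k) (t : Fin n) : Fin k :=
  b (m a + Finsupp.single t 1)

noncomputable def idxChain (m : Fin k → (Fin n →₀ ℕ)) (b : (Fin n →₀ ℕ) → Fin k)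
    (j : Fin k) (σ : ℕ → Fin n) : ℕ → Fin k
  | 0 => j
  | i + 1 => nextIdx m b (idxChain m b j σ i) (σ i)

def IsProductive (K : Type*) [Field K] (m : Fin k → (Fin n →₀ ℕ)) (b : (Fin n →₀ ℕ) → Fin k)
    (j : Fin k) (σ : ℕ → Fin n) (q : ℕ) : Prop :=
  ∀ r < q, σ r ∈ mset K m (idxChain m b j σ r)

lemma chainSeq_eq_comp_idxChain (j : Fin k) (σ : ℕ → Fin n) :
    chainSeq m b (m j) σ = m ∘ idxChain m b j σ := by
  funext i
  induction i with
  | zero => rfl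
  | succ i ih => simp only [chainSeq, ih, Function.comp_apply, idxChain, nextIdx]

lemma idxChain_add_eq {j : Fin k} {σ τ : ℕ → Fin n} {c q s : ℕ}
    (h₀ : idxChain m b j τ (q + c) = idxChain m b j σ q)
    (h : ∀ r, q ≤ r → r < s → τ (r + c) = σ r) :
    ∀ r, q ≤ r → r ≤ s → idxChain m b j τ (r + c) = idxChain m b j σ r := by
  intro r hqr
  induction r, hqr using Nat.le_induction with
  | base => exact fun _ => h₀
  | succ r hqr ih =>
    intro hrs
    rw [show r + 1 + c = r + c + 1 by omega, idxChain, idxChain, ih (by omega),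
      h r hqr (by omega)]

lemma vertSet_subset_vertSet {j : Fin k} {σ τ : ℕ → Fin n} {p : ℕ}
    (h : ∀ r ≤ p, ∃ r' ≤ p, idxChain m b j τ r' = idxChain m b j σ r) :
    vertSet m b (m j) σ p ⊆ vertSet m b (m j) τ p := by
  rintro _ ⟨r, hr, rfl⟩
  obtain ⟨r', hr', he⟩ := h r hr
  exact ⟨r', hr', by simp only [chainSeq_eq_comp_idxChain, Function.comp_apply, he]⟩

section Cycle

variable {j : Fin k} {σ : ℕ → Fin n} {L i : ℕ}

lemma idxChain_cycleIdx_of_le {r : ℕ} (hr : r ≤ L) :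
    idxChain m b j (σ ∘ cycleIdx L i) r = idxChain m b j σ r :=
  idxChain_add_eq (σ := σ) (τ := σ ∘ cycleIdx L i) (q := 0) (c := 0) rfl
    (fun _ _ hr => congrArg σ (cycleIdx_of_lt hr)) r r.zero_le hr

lemma idxChain_cycleIdx_succ_left (hL : L ≤ i) :
    idxChain m b j (σ ∘ cycleIdx L i) (L + 1) = nextIdx m b (idxChain m b j σ L) (σ i) := by
  rw [idxChain, idxChain_cycleIdx_of_le le_rfl, Function.comp_apply, cycleIdx_left hL]

variable (hex : nextIdx m b (nextIdx m b (idxChain m b j σ L) (σ i)) (σ L) =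
  idxChain m b j σ (L + 1))
include hex

lemma idxChain_cycleIdx_succ (hL : L < i) {r : ℕ} (hLr : L + 1 ≤ r) (hri : r ≤ i) :
    idxChain m b j (σ ∘ cycleIdx L i) (r + 1) = idxChain m b j σ r := by
  refine idxChain_add_eq ?_ (fun r hLr hri => ?_) r hLr hri
  · rw [idxChain, idxChain_cycleIdx_succ_left hL.le, Function.comp_apply,
      cycleIdx_succ le_rfl hL, hex]
  · exact congrArg σ (cycleIdx_succ (by omega) hri)

lemma idxChain_cycleIdx_of_gt (hL : L < i)
    (hstat : nextIdx m b (idxChain m b j σ i) (σ i) = idxChain m b j σ i) {r : ℕ}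
    (hr : i < r) :
    idxChain m b j (σ ∘ cycleIdx L i) r = idxChain m b j σ r := by
  refine idxChain_add_eq (σ := σ) (τ := σ ∘ cycleIdx L i) (c := 0) ?_
    (fun _ hir _ => congrArg σ (cycleIdx_of_gt hir)) r hr le_rfl
  rw [add_zero, idxChain_cycleIdx_succ hex hL hL le_rfl, idxChain, hstat]

end Cycle

section Step

variable (hb : IsDecompositionFunction K m b) (hlq : HasLinearQuotients K m)
include hb

lemma nextIdx_le (a : Fin k) (t : Fin n) : nextIdx m b a t ≤ a :=
  hb.le_of_le le_self_add

lemma gen_nextIdx_le (a : Fin k) (t : Fin n) : m (nextIdx m b a t) ≤ m a + Finsupp.single t 1 :=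
  hb.gen_le le_self_add

include hlq

lemma exists_add_eq_nextIdx (a : Fin k) (t : Fin n) :
    ∃ z, m (nextIdx m b a t) + z = m a + Finsupp.single t 1 ∧
      ∀ r ∈ mset K m (nextIdx m b a t), z r = 0 := by
  obtain ⟨z, hz⟩ := exists_add_of_le (gen_nextIdx_le hb a t)
  exact ⟨z, hz.symm, (hb.apply_add_eq_iff hlq).mp (by rw [← hz]; rfl)⟩

lemma nextIdx_eq_self_iff {a : Fin k} {t : Fin n} : nextIdx m b a t = a ↔ t ∉ mset K m a := by
  rw [nextIdx, hb.apply_add_eq_iff hlq]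
  refine ⟨fun h ht => by simpa using h t ht, fun ht r hr => ?_⟩
  rw [Finsupp.single_apply, if_neg (ne_of_mem_of_not_mem hr ht).symm]

lemma nextIdx_lt_of_mem {a : Fin k} {t : Fin n} (ht : t ∈ mset K m a) : nextIdx m b a t < a :=
  (nextIdx_le hb a t).lt_of_ne fun h => (nextIdx_eq_self_iff hb hlq).mp h ht

lemma nextIdx_ne_nextIdx (hmin : MinimalGens m) {a : Fin k} {s t : Fin n} (hst : s ≠ t)
    (hs : s ∈ mset K m a) : nextIdx m b a s ≠ nextIdx m b a t := by
  intro h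
  have hle : m (nextIdx m b a s) ≤ m a :=
    Finsupp.le_of_le_add_single_of_le_add_single hst (gen_nextIdx_le hb a s)
      (h ▸ gen_nextIdx_le hb a t)
  exact (nextIdx_lt_of_mem hb hlq hs).ne (hmin _ _ hle)

lemma apply_add_single_add_single_of_not_mem {a : Fin k} {s t : Fin n}
    (hs : s ∉ mset K m (nextIdx m b a t)) :
    b (m a + Finsupp.single t 1 + Finsupp.single s 1) = nextIdx m b a t := by
  obtain ⟨z, hz, hz0⟩ := exists_add_eq_nextIdx hb hlq a t
  rw [← hz, add_assoc]
  refine (hb.apply_add_eq_iff hlq).mpr fun r hr => ?_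
  rw [Finsupp.add_apply, hz0 r hr, Finsupp.single_apply, if_neg (ne_of_mem_of_not_mem hr hs).symm,
    add_zero]

lemma apply_add_single_add_single_of_mem (hreg : IsRegularDecomp K m b) {a : Fin k}
    {s t : Fin n} (hs : s ∈ mset K m (nextIdx m b a t)) :
    b (m a + Finsupp.single t 1 + Finsupp.single s 1) = nextIdx m b (nextIdx m b a t) s := by
  obtain ⟨z, hz, hz0⟩ := exists_add_eq_nextIdx hb hlq a t
  obtain ⟨y, hy, hy0⟩ := exists_add_eq_nextIdx hb hlq (nextIdx m b a t) s
  have hw : m a + Finsupp.single t 1 + Finsupp.single s 1 =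
      m (nextIdx m b (nextIdx m b a t) s) + (y + z) := by
    calc m a + Finsupp.single t 1 + Finsupp.single s 1
        = m (nextIdx m b a t) + Finsupp.single s 1 + z := by
          rw [← hz]; abel
      _ = m (nextIdx m b (nextIdx m b a t) s) + (y + z) := by
          rw [← hy, add_assoc]
  rw [hw]
  refine (hb.apply_add_eq_iff hlq).mpr fun r hr => ?_
  rw [Finsupp.add_apply, hy0 r hr, hz0 r (hreg _ s hs hr)]

lemma nextIdx_exchange (hmin : MinimalGens m) (hreg : IsRegularDecomp K m b) {a : Fin k}
    {s t : Fin n} (hst : s ≠ t) (hs : s ∈ mset K m a) (hns : s ∉ mset K m (nextIdx m b a t)) :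
    t ∈ mset K m (nextIdx m b a s) ∧ nextIdx m b (nextIdx m b a s) t = nextIdx m b a t := by
  have hw : b (m a + Finsupp.single s 1 + Finsupp.single t 1) = nextIdx m b a t := by
    rw [add_right_comm]; exact apply_add_single_add_single_of_not_mem hb hlq hns
  have ht : t ∈ mset K m (nextIdx m b a s) := by
    by_contra ht
    exact nextIdx_ne_nextIdx hb hlq hmin hst hs
      ((apply_add_single_add_single_of_not_mem hb hlq ht).symm.trans hw)
  exact ⟨ht, (apply_add_single_add_single_of_mem hb hlq hreg ht).symm.trans hw⟩


lemma exists_permOf_productive_succ (hmin : MinimalGens m) (hreg : IsRegularDecomp K m b)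
    {j : Fin k} {α : Finset (Fin n)} (hα : ↑α ⊆ mset K m j) {p i : ℕ} {σ : ℕ → Fin n}
    (hσ : PermOf σ p α) (hi : i < p) (hprod : IsProductive K m b j σ i) :
    ∃ τ : ℕ → Fin n, PermOf τ p α ∧ IsProductive K m b j τ (i + 1) ∧
      vertSet m b (m j) σ p ⊆ vertSet m b (m j) τ p := by
  by_cases hσi : σ i ∈ mset K m (idxChain m b j σ i)
  · exact ⟨σ, hσ, fun r hr => (Nat.lt_succ_iff_lt_or_eq.mp hr).elim (hprod r) (· ▸ hσi),
      subset_rfl⟩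
  obtain ⟨L, hLi, hL, hL1⟩ := Nat.exists_lt_and_not_succ_of_zero
    (P := fun l => σ i ∈ mset K m (idxChain m b j σ l))
    (hα (by simpa [hσ.2] using ⟨i, hi, rfl⟩)) hσi
  have hst : σ i ≠ σ L := fun h => hLi.ne' (hσ.1 hi (hLi.trans hi) h)
  obtain ⟨hmem, hex⟩ := nextIdx_exchange hb hlq hmin hreg hst hL hL1
  have hstat := (nextIdx_eq_self_iff hb hlq).mpr hσi
  refine ⟨σ ∘ cycleIdx L i, hσ.comp_bijOn (bijOn_cycleIdx hi), fun r hr => ?_, ?_⟩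
  · show σ (cycleIdx L i r) ∈ _
    rcases lt_trichotomy r L with hrL | rfl | hLr
    · rw [cycleIdx_of_lt hrL, idxChain_cycleIdx_of_le hrL.le]
      exact hprod r (by omega)
    · rwa [cycleIdx_left hLi.le, idxChain_cycleIdx_of_le le_rfl]
    obtain ⟨r, rfl⟩ : ∃ r', r = r' + 1 := ⟨r - 1, by omega⟩
    rw [cycleIdx_succ (by omega) (by omega)]
    rcases (Nat.le_of_lt_succ hLr).eq_or_lt with rfl | hLr
    · rwa [idxChain_cycleIdx_succ_left hLi.le]
    · rw [idxChain_cycleIdx_succ hex hLi hLr (by omega)]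
      exact hprod r (by omega)
  · refine vertSet_subset_vertSet fun r hr => ?_
    rcases le_or_gt r L with hrL | hLr
    · exact ⟨r, hr, idxChain_cycleIdx_of_le hrL⟩
    rcases le_or_gt r i with hri | hir
    · exact ⟨r + 1, by omega, idxChain_cycleIdx_succ hex hLi hLr hri⟩
    · exact ⟨r, hr, idxChain_cycleIdx_of_gt hex hLi hstat hir⟩

lemma exists_permOf_productive (hmin : MinimalGens m) (hreg : IsRegularDecomp K m b)
    {j : Fin k} {α : Finset (Fin n)} (hα : ↑α ⊆ mset K m j) {p : ℕ} {σ : ℕ → Fin n}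
    (hσ : PermOf σ p α) {q : ℕ} (hq : q ≤ p) :
    ∃ τ : ℕ → Fin n, PermOf τ p α ∧ IsProductive K m b j τ q ∧
      vertSet m b (m j) σ p ⊆ vertSet m b (m j) τ p := by
  induction q with
  | zero => exact ⟨σ, hσ, fun _ h => absurd h (Nat.not_lt_zero _), subset_rfl⟩
  | succ q ih =>
    obtain ⟨τ, hτ, hprod, hsub⟩ := ih (by omega)
    obtain ⟨τ', hτ', hprod', hsub'⟩ :=
      exists_permOf_productive_succ hb hlq hmin hreg hα hτ hq hprod
    exact ⟨τ', hτ', hprod', hsub.trans hsub'⟩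

lemma nondeg_of_productive (hmin : MinimalGens m) {j : Fin k} {σ : ℕ → Fin n} {p : ℕ}
    (hprod : IsProductive K m b j σ p) : Nondeg m b (m j) σ p := by
  have hanti : StrictAntiOn (idxChain m b j σ) (Set.Iic p) :=
    strictAntiOn_Iic_of_succ_lt fun r hr => nextIdx_lt_of_mem hb hlq (hprod r hr)
  have hm : Function.Injective m := fun _ _ h => hmin _ _ h.le
  rw [Nondeg, chainSeq_eq_comp_idxChain]
  exact hm.comp_injOn hanti.injOn

end Step

end

theorem stmt1_general (K : Type*) [Field K] {n k : ℕ} (m : Fin k → (Fin n →₀ ℕ))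
    (hmin : MinimalGens m) (hlq : HasLinearQuotients K m)
    (b : (Fin n →₀ ℕ) → Fin k) (hb : IsDecompositionFunction K m b)
    (hreg : IsRegularDecomp K m b)
    (j : Fin k) (α : Finset (Fin n)) (hα : ↑α ⊆ mset K m j)
    (p : ℕ)
    (σ : ℕ → Fin n) (hσ : PermOf σ p α) :
    ∃ σ' : ℕ → Fin n, PermOf σ' p α ∧ Nondeg m b (m j) σ' p ∧
      vertSet m b (m j) σ p ⊆ vertSet m b (m j) σ' p ∧
      convexHull ℝ (toR '' vertSet m b (m j) σ p) ⊆
        convexHull ℝ (toR '' vertSet m b (m j) σ' p) := by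
  obtain ⟨σ', hσ', hprod, hsub⟩ := exists_permOf_productive hb hlq hmin hreg hα hσ le_rfl
  exact ⟨σ', hσ', nondeg_of_productive hb hlq hmin hprod, hsub,
    convexHull_mono (Set.image_mono hsub)⟩

/-- if `ch(m,α,σ)` is degenerate then there is a permutation `σ'` of `α`
with `ch(m,α,σ')` nondegenerate such that every vertex monomial of `ch(m,α,σ)` occurs
among the vertex monomials of `ch(m,α,σ')`; in particular `ch(m,α,σ)` is a face of the
simplex `ch(m,α,σ')`. -/
theorem stmt1 (K : Type*) [Field K] {n k : ℕ} (m : Fin k → (Fin n →₀ ℕ))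
    (hmin : MinimalGens m) (hlq : HasLinearQuotients K m)
    (b : (Fin n →₀ ℕ) → Fin k) (hb : IsDecompositionFunction K m b)
    (hreg : IsRegularDecomp K m b)
    (j : Fin k) (α : Finset (Fin n)) (hα : ↑α ⊆ mset K m j)
    (p : ℕ) (hcard : α.card = p)
    (σ : ℕ → Fin n) (hσ : PermOf σ p α)
    (hdeg : ¬ Nondeg m b (m j) σ p) :
    ∃ σ' : ℕ → Fin n, PermOf σ' p α ∧ Nondeg m b (m j) σ' p ∧
      vertSet m b (m j) σ p ⊆ vertSet m b (m j) σ' p ∧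
      convexHull ℝ (toR '' vertSet m b (m j) σ p) ⊆
        convexHull ℝ (toR '' vertSet m b (m j) σ' p) :=
  stmt1_general K m hmin hlq b hb hreg j α hα p σ hσ
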